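/- T₁ is not closed under concatenation: the languages a⁺ and b⁺ both belong to T₀ (hence T₁), but a⁺·b⁺ does not belong to T₁. -/
import Mathlib


/-- A state `q` of a DFA is *observable* if some word leads from it to an accepting state. -/
def ObsState {α σ : Type} (M : DFA α σ) (q : σ) : Prop :=
  ∃ w : List α, M.evalFrom q w ∈ M.accept

/-- A state is *semi-observable* if it is observable and some single input symbol
leads from it to a non-observable state. -/
def SemiObsState {α σ : Type} (M : DFA α σ) (q : σ) : Prop :=
  ObsState M q ∧ ∃ a : α, ¬ ObsState M (M.step q a)

/-- All states of the DFA are accessible from the start state. -/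
def Accessible {α σ : Type} (M : DFA α σ) : Prop :=
  ∀ q : σ, ∃ w : List α, M.eval w = q

/-- `L` is accepted by some (completely specified, accessible) DFA all of whose
states are observable.  This is membership in the family `O` over the alphabet `α`. -/
def AcceptsObservably (α : Type) (L : Language α) : Prop :=
  ∃ (σ : Type) (_ : Fintype σ) (M : DFA α σ),
    Accessible M ∧ (∀ q : σ, ObsState M q) ∧ M.accepts = L

/-- Membership in the family `T_k`: `L` is accepted by some accessible DFA with at
most `k` semi-observable states. -/
def InT (α : Type) (k : ℕ) (L : Language α) : Prop :=
  ∃ (σ : Type) (_ : Fintype σ) (M : DFA α σ),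
    Accessible M ∧ M.accepts = L ∧ {q : σ | SemiObsState M q}.ncard ≤ k

/-- The alphabet (the whole type `α`) is minimal for `L`: every letter occurs in some word of `L`. -/
def MinimalAlphabet {α : Type} (L : Language α) : Prop :=
  ∀ a : α, ∃ w ∈ L, a ∈ w

/-- `a⁺` over the one-letter alphabet. -/
def aPlus : Language (Fin 1) := {w : List (Fin 1) | w ≠ []}

/-- `a⁺·b⁺ = {aⁿbᵐ : n,m ≥ 1}` over `{a,b}` (with `a = 0`, `b = 1`). -/
def aPlusbPlus : Language (Fin 2) :=
  {w : List (Fin 2) | ∃ n m : ℕ, 1 ≤ n ∧ 1 ≤ m ∧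
    w = List.replicate n 0 ++ List.replicate m 1}

private def M1 : DFA (Fin 1) Bool := ⟨fun _ _ => true, false, {true}⟩

private lemma foldl_const_true (l : List (Fin 1)) :
    List.foldl (fun (_ : Bool) (_ : Fin 1) => true) true l = true := by
  induction l with
  | nil => rfl
  | cons a l ih => simpa using ih

private lemma InT0_aPlus : InT (Fin 1) 0 aPlus := by
  refine ⟨Bool, inferInstance, M1, ?_, ?_, ?_⟩
  · intro q
    cases q
    · exact ⟨[], rfl⟩
    · exact ⟨[0], rfl⟩
  · ext w
    cases w with
    | nil =>
      simp only [DFA.mem_accepts]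
      exact iff_of_false (by simp [M1, DFA.eval, DFA.evalFrom]) (fun h => h rfl)
    | cons a l =>
      have he : M1.eval (a :: l) = true := by
        show List.foldl _ _ _ = true
        rw [List.foldl_cons]; exact foldl_const_true l
      simp only [DFA.mem_accepts, he]
      exact iff_of_true rfl (List.cons_ne_nil a l)
  · have : {q : Bool | SemiObsState M1 q} = ∅ := by
      ext q
      simp only [Set.mem_setOf_eq, Set.mem_empty_iff_false, iff_false]
      rintro ⟨-, a, hna⟩
      exact hna ⟨[], rfl⟩
    simp [this]

private lemma not_one_cons (w : List (Fin 2)) : (1 :: w) ∉ aPlusbPlus := by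
  rintro ⟨n, m, hn, hm, h⟩
  obtain ⟨k, rfl⟩ := Nat.exists_eq_add_of_le hn
  rw [List.replicate_add, List.replicate_one] at h
  simp at h

private lemma not_aba (w : List (Fin 2)) : ([0, 1, 0] ++ w) ∉ aPlusbPlus := by
  rintro ⟨n, m, hn, hm, h⟩
  obtain ⟨k, rfl⟩ := Nat.exists_eq_add_of_le hn
  rw [List.replicate_add, List.replicate_one] at h
  simp only [List.cons_append, List.nil_append, List.singleton_append, List.cons.injEq] at h
  obtain ⟨-, h⟩ := h
  cases k with
  | succ k => rw [List.replicate_succ] at h; simp at h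
  | zero =>
    simp only [List.replicate_zero, List.nil_append] at h
    obtain ⟨j, rfl⟩ := Nat.exists_eq_add_of_le hm
    rw [List.replicate_add, List.replicate_one] at h
    simp only [List.singleton_append, List.cons.injEq] at h
    obtain ⟨-, h⟩ := h
    cases j with
    | zero => simp at h
    | succ j => rw [List.replicate_succ] at h; simp at h

private lemma not_InT1 : ¬ InT (Fin 2) 1 aPlusbPlus := by
  rintro ⟨σ, _, M, -, hL, hcard⟩
  have hmem : ∀ w : List (Fin 2), w ∈ aPlusbPlus ↔ M.evalFrom M.start w ∈ M.accept := by
    intro w; rw [← hL]; rfl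
  have hab : [0, 1] ∈ aPlusbPlus := ⟨1, 1, le_refl 1, le_refl 1, rfl⟩
  have hcons : ∀ (q : σ) (a : Fin 2) (w : List (Fin 2)),
      M.evalFrom q (a :: w) = M.evalFrom (M.step q a) w := fun _ _ _ => rfl
  have happ : ∀ (q : σ) (u v : List (Fin 2)),
      M.evalFrom q (u ++ v) = M.evalFrom (M.evalFrom q u) v := by
    intro q u v; exact List.foldl_append ..
  -- start state is semi-observable
  have h0 : SemiObsState M M.start := by
    refine ⟨⟨[0, 1], (hmem [0,1]).mp hab⟩, 1, ?_⟩
    rintro ⟨w, hw⟩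
    exact not_one_cons w ((hmem (1 :: w)).mpr (by rwa [hcons]))
  -- the state after "ab" is semi-observable
  set q2 := M.evalFrom M.start [0, 1] with hq2
  have h2 : SemiObsState M q2 := by
    refine ⟨⟨[], (hmem [0,1]).mp hab⟩, 0, ?_⟩
    rintro ⟨w, hw⟩
    refine not_aba w ((hmem _).mpr ?_)
    rw [show ([0,1,0] ++ w : List (Fin 2)) = [0,1] ++ (0 :: w) by rfl,
      happ, ← hq2, hcons]
    exact hw
  have hne : M.start ≠ q2 := by
    intro h
    have : ([0,1,0] ++ [1] : List (Fin 2)) ∈ aPlusbPlus := by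
      refine (hmem _).mpr ?_
      rw [show ([0,1,0] ++ [1] : List (Fin 2)) = [0,1] ++ [0,1] by rfl, happ, ← hq2, ← h]
      exact (hmem [0,1]).mp hab
    exact not_aba [1] this
  have hfin : ({q : σ | SemiObsState M q}).Finite := Set.toFinite _
  have : 1 < ({q : σ | SemiObsState M q}).ncard :=
    (Set.one_lt_ncard hfin).mpr ⟨M.start, h0, q2, h2, hne⟩
  omega

/-- `T₁` is not closed under concatenation: `a⁺` and `b⁺` lie in `T₀` (hence `T₁`)
over their own one-letter alphabets, but `a⁺·b⁺` does not lie in `T₁`. -/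
theorem T1_not_closed_concat :
    InT (Fin 1) 0 aPlus ∧ InT (Fin 1) 1 aPlus ∧ ¬ InT (Fin 2) 1 aPlusbPlus := by
  refine ⟨InT0_aPlus, ?_, not_InT1⟩
  obtain ⟨σ, i, M, h1, h2, h3⟩ := InT0_aPlus
  exact ⟨σ, i, M, h1, h2, h3.trans (by norm_num)⟩
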